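/- Let A be a unital C*-algebra admitting no characters. Then there exist finitely many unitaries u₁, u₂, …, uₙ in A such that every state ρ on A satisfies |ρ(uⱼ)| < 1 for some j ∈ {1, …, n}. -/

import Mathlib

/-!
If a state `ρ` has `|ρ u| = 1` on a unitary `u`, then `ρ (star x * x) = 0` for `x = u - ρ u`, so
by the Cauchy–Schwarz inequality for `(a, b) ↦ ρ (star a * b)` we get `ρ (b * u) = ρ b * ρ u`
for every `b`. Unitaries span `A`, hence a state of modulus one on all unitaries is a character.
Without characters the weak-* open sets `{φ | |φ u| < 1}` therefore cover the state space, which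
is weak-* compact, and a finite subcover yields the unitaries.
-/

open scoped ComplexOrder

namespace PositiveLinearMap

section NonUnital

variable {A : Type*} [NonUnitalCStarAlgebra A] [PartialOrder A] [StarOrderedRing A]
  (f : A →ₚ[ℂ] ℂ)

theorem norm_apply_star_mul_le (a b : A) :
    ‖f (star a * b)‖ ≤ √(f (star a * a)).re * √(f (star b * b)).re :=
  norm_inner_le_norm (f.toPreGNS a) (f.toPreGNS b)

theorem apply_mul_eq_zero_of_apply_star_mul_self_eq_zero {x : A} (hx : f (star x * x) = 0)
    (b : A) : f (b * x) = 0 := by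
  have := f.norm_apply_star_mul_le (star b) x
  rw [star_star, hx, Complex.zero_re, Real.sqrt_zero, mul_zero] at this
  exact norm_le_zero_iff.mp this

end NonUnital

variable {A : Type*} [CStarAlgebra A] [PartialOrder A] [StarOrderedRing A] (f : A →ₚ[ℂ] ℂ)

noncomputable def ofStarMulSelfNonneg (ρ : A →ₗ[ℂ] ℂ) (hρ : ∀ a, 0 ≤ ρ (star a * a)) :
    A →ₚ[ℂ] ℂ :=
  .mk₀ ρ fun x hx => by
    obtain ⟨a, rfl⟩ := CStarAlgebra.nonneg_iff_eq_star_mul_self.mp hx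
    exact hρ a

theorem norm_apply_le (a : A) : ‖f a‖ ≤ ‖f 1‖ * ‖a‖ := by
  have hCS := f.norm_apply_star_mul_le 1 a
  rw [star_one, one_mul, mul_one] at hCS
  have hre_one : (f 1).re ≤ ‖f 1‖ := Complex.re_le_norm _
  have hre_star : (f (star a * a)).re ≤ ‖f 1‖ * ‖a‖ ^ 2 := by
    refine (Complex.re_le_norm _).trans ?_
    simpa [CStarRing.norm_star_mul_self, sq] using
      f.norm_apply_le_of_nonneg _ (star_mul_self_nonneg a)
  calc ‖f a‖ ≤ √‖f 1‖ * √(‖f 1‖ * ‖a‖ ^ 2) := hCS.trans (by gcongr)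
    _ = ‖f 1‖ * ‖a‖ := by
      rw [← Real.sqrt_mul (norm_nonneg _), ← mul_assoc, ← sq, ← mul_pow,
        Real.sqrt_sq (by positivity)]

theorem apply_mul_eq_of_mem_unitary (h1 : f 1 = 1) {u : A} (hu : u ∈ unitary A)
    (hfu : 1 ≤ ‖f u‖) (b : A) : f (b * u) = f b * f u := by
  have hstar : f (star u) = starRingEnd ℂ (f u) := map_star f u
  have hnorm : ‖f u‖ = 1 := by
    refine le_antisymm ?_ hfu
    simpa [Unitary.star_mul_self_of_mem hu, h1] using f.norm_apply_star_mul_le 1 u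
  have hconj : starRingEnd ℂ (f u) * f u = 1 := by
    rw [mul_comm, Complex.mul_conj, Complex.normSq_eq_norm_sq, hnorm]; simp
  have hzero : f (star (u - f u • 1) * (u - f u • 1)) = 0 := by
    simp only [star_sub, star_smul, star_one, sub_mul, mul_sub, smul_mul_assoc, mul_smul_comm,
      one_mul, mul_one, map_sub, map_smul, smul_eq_mul, Unitary.star_mul_self_of_mem hu, h1, hstar,
      RCLike.star_def]
    linear_combination (-1) * hconj
  have := f.apply_mul_eq_zero_of_apply_star_mul_self_eq_zero hzero b
  rw [mul_sub, mul_smul_comm, mul_one, map_sub, map_smul, smul_eq_mul] at this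
  linear_combination this

theorem map_mul_of_one_le_norm_apply_unitary (h1 : f 1 = 1)
    (hu : ∀ u ∈ unitary A, 1 ≤ ‖f u‖) (a b : A) : f (a * b) = f a * f b := by
  have hb : b ∈ Submodule.span ℂ (unitary A : Set A) := by
    simp [CStarAlgebra.span_unitary]
  induction hb using Submodule.span_induction with
  | mem u hu' => exact f.apply_mul_eq_of_mem_unitary h1 hu' (hu u hu') a
  | zero => simp
  | add x y _ _ hx hy => rw [mul_add, map_add, map_add, hx, hy, mul_add]
  | smul c x _ hx =>
    rw [mul_smul_comm, map_smul, map_smul, hx, smul_eq_mul, smul_eq_mul, mul_left_comm]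

end PositiveLinearMap

namespace CStarAlgebra

variable (A : Type*) [CStarAlgebra A]

def stateSpace : Set (WeakDual ℂ A) := {φ | φ 1 = 1 ∧ ∀ a, 0 ≤ φ (star a * a)}

theorem isClosed_stateSpace : IsClosed (stateSpace A) := by
  simp only [stateSpace, Set.ofPred_and, Set.ofPred_forall]
  exact (isClosed_eq (WeakDual.eval_continuous 1) continuous_const).inter <|
    isClosed_iInter fun a => isClosed_le continuous_const (WeakDual.eval_continuous _)

theorem isCompact_stateSpace : IsCompact (stateSpace A) := by
  let := spectralOrder A
  have := spectralOrderedRing A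
  refine (WeakDual.isCompact_closedBall 0 1).of_isClosed_subset (isClosed_stateSpace A) ?_
  rintro φ ⟨h1, hpos⟩
  rw [Set.mem_preimage, mem_closedBall_zero_iff]
  refine ContinuousLinearMap.opNorm_le_bound _ zero_le_one fun a => ?_
  let f := PositiveLinearMap.ofStarMulSelfNonneg (WeakDual.toStrongDual φ).toLinearMap hpos
  have hf1 : f 1 = 1 := h1
  exact (f.norm_apply_le a).trans_eq (by rw [hf1, norm_one])

theorem stateSpace_subset_iUnion_unitary [IsEmpty (A →ₐ[ℂ] ℂ)] :
    stateSpace A ⊆ ⋃ u : unitary A, {φ | ‖φ u‖ < 1} := by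
  let := spectralOrder A
  have := spectralOrderedRing A
  rintro φ ⟨h1, hpos⟩
  by_contra hφ
  simp only [Set.mem_iUnion, Set.mem_ofPred_eq, not_exists, not_lt] at hφ
  let f := PositiveLinearMap.ofStarMulSelfNonneg (WeakDual.toStrongDual φ).toLinearMap hpos
  exact IsEmpty.false (AlgHom.ofLinearMap f.toLinearMap h1
    (f.map_mul_of_one_le_norm_apply_unitary h1 fun u hu => hφ ⟨u, hu⟩))

theorem exists_mem_stateSpace_eq (ρ : A →ₗ[ℂ] ℂ) (h1 : ρ 1 = 1)
    (hpos : ∀ a, 0 ≤ ρ (star a * a)) :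
    ∃ φ ∈ stateSpace A, ∀ a, φ a = ρ a := by
  let := spectralOrder A
  have := spectralOrderedRing A
  let f := PositiveLinearMap.ofStarMulSelfNonneg ρ hpos
  exact ⟨StrongDual.toWeakDual ⟨f.toLinearMap, map_continuous f⟩, ⟨h1, hpos⟩, fun _ => rfl⟩

end CStarAlgebra

/-- Let `A` be a unital C*-algebra admitting no characters (a character
being a unital algebra homomorphism `A → ℂ`).  Then there exist finitely many unitaries
`u₁, …, uₙ` in `A` such that every state `ρ` on `A` (linear with `ρ 1 = 1` and
`ρ (a* a) ≥ 0` for all `a`) satisfies `|ρ(uⱼ)| < 1` for some `j`. -/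
theorem exists_unitaries_separating_states (A : Type*) [CStarAlgebra A]
    (h : IsEmpty (A →ₐ[ℂ] ℂ)) :
    ∃ (n : ℕ) (u : Fin n → unitary A), 1 ≤ n ∧
      ∀ ρ : A →ₗ[ℂ] ℂ, ρ 1 = 1 → (∀ a : A, 0 ≤ ρ (star a * a)) →
        ∃ j : Fin n, ‖ρ (u j)‖ < 1 := by
  classical
  obtain ⟨t, ht⟩ := (CStarAlgebra.isCompact_stateSpace A).elim_finite_subcover _
    (fun u => isOpen_lt (WeakDual.eval_continuous _).norm continuous_const)
    (CStarAlgebra.stateSpace_subset_iUnion_unitary A)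
  -- `insert 1` only serves to make the family nonempty
  let s := insert 1 t
  refine ⟨s.card, fun j => s.equivFin.symm j, s.card_pos.2 (Finset.insert_nonempty 1 t),
    fun ρ h1 hpos => ?_⟩
  obtain ⟨φ, hφ, hφρ⟩ := CStarAlgebra.exists_mem_stateSpace_eq A ρ h1 hpos
  obtain ⟨v, hv, hφv⟩ := Set.mem_iUnion₂.mp (ht hφ)
  exact ⟨s.equivFin ⟨v, Finset.mem_insert_of_mem hv⟩, by simpa [← hφρ] using hφv⟩
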